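/- Fix $x \ge 0$ and a finite counting measure $\mu$ on $[0,\infty)$. For any two non-increasing rate functions $r, \tilde{r}: \mathbb{N}^* \to (0,1]$ with $r(i) \le \tilde{r}(i)$ for all $i$, we have $\Phi^{\tilde r}(\mu, x) \preceq \Phi^{r}(\mu, x)$, i.e. a slower server leaves a larger service profile. -/

import Mathlib

/-!
Let `N` be the number of atoms `α₁ ≤ … ≤ α_N`. Serving every customer up to level `γ` under the
rate function `ρ` takes the time `T^ρ(γ) = ∑ᵢ (min(γ, α_{i+1}) - min(γ, α_i)) / ρ(N - i)`, since
while the common level of the customers still present rises from `α_i` to `α_{i+1}` there are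
`N - i` of them. Summation by parts identifies `γ^ρ(μ, x)` as the solution of `T^ρ(γ) = x`.
`T^ρ` is strictly increasing in `γ` and antitone in `ρ`, so `r ≤ r̃` gives
`γ^r(μ, x) ≤ γ^{r̃}(μ, x)`: the slower server removes less service, and every nonnegative
nondecreasing test function integrates to more against `τ_{γ^r} μ` than against `τ_{γ^{r̃}} μ`.
-/

open MeasureTheory Filter Topology

/-- The partial integral order `≼` on finite positive measures. -/
def IntOrder (μ ν : Measure ℝ) : Prop :=
  ∀ f : ℝ → ℝ, Measurable f → Monotone f → (∀ x, 0 ≤ f x) → (∃ C, ∀ x, f x ≤ C) →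
    ∫ x, f x ∂μ ≤ ∫ x, f x ∂ν

/-- The `i`-th smallest atom (1-based) of the finite counting measure represented by the
multiset `m`. -/
noncomputable def atom (m : Multiset ℝ) (i : ℕ) : ℝ :=
  (m.sort (· ≤ ·)).getD (i - 1) 0

/-- `γ_i^r(m, x)`. -/
noncomputable def gam (r : ℕ → ℝ) (m : Multiset ℝ) (x : ℝ) (i : ℕ) : ℝ :=
  r (Multiset.card m - i + 1) *
    (x - ∑ j ∈ Finset.Icc 1 (i - 1),
      atom m j * (1 / r (Multiset.card m - j + 1) - 1 / r (Multiset.card m - j)))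

open Classical in
/-- `i^r(m, x) = max {i ≤ N(m) : α_i(m) ≤ γ_i^r(m,x)}`, with `max ∅ = 0`. -/
noncomputable def irdx (r : ℕ → ℝ) (m : Multiset ℝ) (x : ℝ) : ℕ :=
  (((Finset.Icc 1 (Multiset.card m)).filter (fun i => atom m i ≤ gam r m x i)).max).unbotD 0

/-- `γ^r(m, x)`, the amount of attained service per customer by time `x`
(`0` for the empty profile). -/
noncomputable def gammaStar (r : ℕ → ℝ) (m : Multiset ℝ) (x : ℝ) : ℝ :=
  if m = 0 then 0 else gam r m x (min (irdx r m x + 1) (Multiset.card m))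

open Classical in
/-- The one-step processor-sharing map `Φ^r(·, x) = τ_{γ^r(·,x)}`. -/
noncomputable def PhiM (r : ℕ → ℝ) (m : Multiset ℝ) (x : ℝ) : Multiset ℝ :=
  (m.filter (fun a => gammaStar r m x < a)).map (fun a => a - gammaStar r m x)

/-- The counting measure associated to a multiset of atoms. -/
noncomputable def toMeas (m : Multiset ℝ) : Measure ℝ :=
  (m.map (fun a => (Measure.dirac a : Measure ℝ))).sum


open Finset

lemma Finset.le_max_unbotD {α : Type*} [LinearOrder α] {s : Finset α} {a : α} (d : α)
    (ha : a ∈ s) : a ≤ s.max.unbotD d :=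
  WithBot.le_unbotD (Finset.le_max ha)

lemma Finset.max_unbotD_mem {α : Type*} [LinearOrder α] {s : Finset α} (d : α)
    (hs : s.Nonempty) : s.max.unbotD d ∈ s := by
  obtain ⟨a, ha⟩ := Finset.max_of_nonempty hs
  rw [ha, WithBot.unbotD_coe]
  exact Finset.mem_of_max ha

lemma sum_range_sub_mul_eq {R : Type*} [CommRing R] {a w : ℕ → R} (ha : a 0 = 0) (k : ℕ) :
    ∑ i ∈ range k, (a (i + 1) - a i) * w i =
      ∑ j ∈ Icc 1 k, a j * (w (j - 1) - w j) + a k * w k := by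
  induction k with
  | zero => simp [ha]
  | succ k ih =>
    rw [sum_range_succ, ih, sum_Icc_succ_top (by omega), Nat.add_sub_cancel]
    ring

lemma Multiset.sum_map_filter_le_sum_map_filter {ι M : Type*} [AddCommMonoid M] [PartialOrder M]
    [IsOrderedAddMonoid M] {p q : ι → Prop} [DecidablePred p] [DecidablePred q] {f g : ι → M}
    (hpq : ∀ a, p a → q a) (hfg : ∀ a, p a → f a ≤ g a) (hg : ∀ a, 0 ≤ g a) (s : Multiset ι) :
    ((s.filter p).map f).sum ≤ ((s.filter q).map g).sum := by
  induction s using Multiset.induction with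
  | empty => simp
  | cons a s ih =>
    by_cases hp : p a
    · simpa [Multiset.filter_cons_of_pos _ hp, Multiset.filter_cons_of_pos _ (hpq a hp)]
        using add_le_add (hfg a hp) ih
    · rw [Multiset.filter_cons_of_neg _ hp]
      by_cases hq : q a
      · simpa [Multiset.filter_cons_of_pos _ hq] using le_add_of_nonneg_of_le (hg a) ih
      · rwa [Multiset.filter_cons_of_neg _ hq]

lemma integrable_toMeas (f : ℝ → ℝ) (s : Multiset ℝ) : Integrable f (toMeas s) := by
  induction s using Multiset.induction with
  | empty => simp [toMeas]
  | cons a s ih =>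
    simpa [toMeas] using integrable_add_measure.mpr ⟨integrable_dirac enorm_lt_top, ih⟩

lemma integral_toMeas (f : ℝ → ℝ) (s : Multiset ℝ) :
    ∫ y, f y ∂(toMeas s) = (s.map f).sum := by
  induction s using Multiset.induction with
  | empty => simp [toMeas]
  | cons a s ih =>
    have hcons : toMeas (a ::ₘ s) = Measure.dirac a + toMeas s := by simp [toMeas]
    rw [hcons, integral_add_measure (integrable_dirac enorm_lt_top) (integrable_toMeas f s),
      integral_dirac, ih, Multiset.map_cons, Multiset.sum_cons]

lemma atom_mem (m : Multiset ℝ) {i : ℕ} (h1 : 1 ≤ i) (h2 : i ≤ Multiset.card m) :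
    atom m i ∈ m := by
  have hi : i - 1 < (m.sort (· ≤ ·)).length := by rw [Multiset.length_sort]; omega
  rw [atom, List.getD_eq_getElem _ _ hi, ← Multiset.mem_sort (· ≤ ·)]
  exact List.getElem_mem hi

lemma atom_le_atom (m : Multiset ℝ) {i j : ℕ} (h1 : 1 ≤ i) (hij : i ≤ j)
    (h2 : j ≤ Multiset.card m) : atom m i ≤ atom m j := by
  have hi : i - 1 < (m.sort (· ≤ ·)).length := by rw [Multiset.length_sort]; omega
  have hj : j - 1 < (m.sort (· ≤ ·)).length := by rw [Multiset.length_sort]; omega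
  rw [atom, atom, List.getD_eq_getElem _ _ hi, List.getD_eq_getElem _ _ hj]
  rcases hij.eq_or_lt with rfl | hlt
  · rfl
  · exact (Multiset.pairwise_sort m (· ≤ ·)).rel_get_of_lt
      (a := ⟨i - 1, hi⟩) (b := ⟨j - 1, hj⟩) (by simp only [Fin.mk_lt_mk]; omega)

lemma gam_one (ρ : ℕ → ℝ) {m : Multiset ℝ} (hm : m ≠ 0) (x : ℝ) :
    gam ρ m x 1 = ρ (Multiset.card m) * x := by
  have : 1 ≤ Multiset.card m := Multiset.card_pos.mpr hm
  simp [gam, Nat.sub_add_cancel this]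

lemma gam_succ (ρ : ℕ → ℝ) (hρ : ∀ n, 1 ≤ n → 0 < ρ n) (m : Multiset ℝ) (x : ℝ) {i : ℕ}
    (h1 : 1 ≤ i) (h2 : i < Multiset.card m) :
    gam ρ m x (i + 1) = atom m i +
      ρ (Multiset.card m - i) / ρ (Multiset.card m - i + 1) * (gam ρ m x i - atom m i) := by
  have ha := (hρ (Multiset.card m - i) (by omega)).ne'
  have hb := (hρ (Multiset.card m - i + 1) (by omega)).ne'
  have hsplit := sum_Icc_succ_top (a := 1) (b := i - 1) (by omega)
    (fun j => atom m j * (1 / ρ (Multiset.card m - j + 1) - 1 / ρ (Multiset.card m - j)))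
  rw [Nat.sub_add_cancel h1] at hsplit
  rw [gam, Nat.add_sub_cancel, show Multiset.card m - (i + 1) + 1 = Multiset.card m - i by omega,
    hsplit, gam]
  field_simp
  ring

lemma atom_le_gam_succ (ρ : ℕ → ℝ) (hρ : ∀ n, 1 ≤ n → 0 < ρ n) (m : Multiset ℝ) (x : ℝ)
    {i : ℕ} (h1 : 1 ≤ i) (h2 : i < Multiset.card m) (hi : atom m i ≤ gam ρ m x i) :
    atom m i ≤ gam ρ m x (i + 1) := by
  have ha := hρ (Multiset.card m - i) (by omega)
  have hb := hρ (Multiset.card m - i + 1) (by omega)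
  rw [gam_succ ρ hρ m x h1 h2]
  have := mul_nonneg (div_nonneg ha.le hb.le) (sub_nonneg.mpr hi)
  linarith

lemma irdx_le_card (ρ : ℕ → ℝ) (m : Multiset ℝ) (x : ℝ) : irdx ρ m x ≤ Multiset.card m := by
  unfold irdx
  rcases Finset.eq_empty_or_nonempty
    ((Icc 1 (Multiset.card m)).filter fun i => atom m i ≤ gam ρ m x i) with h | h
  · simp [h]
  · exact (mem_Icc.mp (mem_filter.mp (max_unbotD_mem 0 h)).1).2

lemma atom_irdx_le_gam (ρ : ℕ → ℝ) (m : Multiset ℝ) (x : ℝ) (h : 1 ≤ irdx ρ m x) :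
    atom m (irdx ρ m x) ≤ gam ρ m x (irdx ρ m x) := by
  unfold irdx at h ⊢
  rcases Finset.eq_empty_or_nonempty
    ((Icc 1 (Multiset.card m)).filter fun i => atom m i ≤ gam ρ m x i) with hF | hF
  · simp [hF] at h
  · exact (mem_filter.mp (max_unbotD_mem 0 hF)).2

lemma gam_irdx_succ_lt_atom (ρ : ℕ → ℝ) (m : Multiset ℝ) (x : ℝ)
    (h : irdx ρ m x + 1 ≤ Multiset.card m) :
    gam ρ m x (irdx ρ m x + 1) < atom m (irdx ρ m x + 1) := by
  by_contra! hle
  have hmem : irdx ρ m x + 1 ∈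
      (Icc 1 (Multiset.card m)).filter fun i => atom m i ≤ gam ρ m x i :=
    mem_filter.mpr ⟨mem_Icc.mpr ⟨by omega, h⟩, hle⟩
  have := le_max_unbotD 0 hmem
  unfold irdx at this
  omega

noncomputable def serviceIndex (ρ : ℕ → ℝ) (m : Multiset ℝ) (x : ℝ) : ℕ :=
  min (irdx ρ m x + 1) (Multiset.card m)

section gammaStar

variable (ρ : ℕ → ℝ) {m : Multiset ℝ} (hm : m ≠ 0) (x : ℝ)
include hm

lemma gammaStar_eq_gam : gammaStar ρ m x = gam ρ m x (serviceIndex ρ m x) :=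
  if_neg hm

lemma atom_irdx_le_gammaStar (hρ : ∀ n, 1 ≤ n → 0 < ρ n) (h : 1 ≤ irdx ρ m x) :
    atom m (irdx ρ m x) ≤ gammaStar ρ m x := by
  have hle := atom_irdx_le_gam ρ m x h
  rw [gammaStar_eq_gam ρ hm, serviceIndex]
  rcases (irdx_le_card ρ m x).eq_or_lt with heq | hlt
  · rwa [heq, min_eq_right (Nat.le_succ _), ← heq]
  · rw [min_eq_left hlt]
    exact atom_le_gam_succ ρ hρ m x h hlt hle

lemma atom_le_gammaStar (hρ : ∀ n, 1 ≤ n → 0 < ρ n) {j : ℕ} (h1 : 1 ≤ j)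
    (h2 : j < serviceIndex ρ m x) : atom m j ≤ gammaStar ρ m x := by
  have hj : j ≤ irdx ρ m x := by unfold serviceIndex at h2; omega
  exact (atom_le_atom m h1 hj (irdx_le_card ρ m x)).trans
    (atom_irdx_le_gammaStar ρ hm x hρ (h1.trans hj))

lemma gammaStar_le_atom {j : ℕ} (h1 : serviceIndex ρ m x ≤ j) (h2 : j < Multiset.card m) :
    gammaStar ρ m x ≤ atom m j := by
  have hτ : serviceIndex ρ m x = irdx ρ m x + 1 := by unfold serviceIndex at h1 ⊢; omega
  rw [gammaStar_eq_gam ρ hm, hτ]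
  exact (gam_irdx_succ_lt_atom ρ m x (by omega)).le.trans
    (atom_le_atom m (by omega) (by omega) h2.le)

lemma gammaStar_nonneg (hρ : ∀ n, 1 ≤ n → 0 < ρ n) (hm₀ : ∀ a ∈ m, 0 ≤ a) (hx : 0 ≤ x) :
    0 ≤ gammaStar ρ m x := by
  have hN : 1 ≤ Multiset.card m := Multiset.card_pos.mpr hm
  rcases Nat.eq_zero_or_pos (irdx ρ m x) with h0 | hpos
  · rw [gammaStar_eq_gam ρ hm, serviceIndex, h0, min_eq_left hN, gam_one ρ hm]
    exact mul_nonneg (hρ _ hN).le hx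
  · exact (hm₀ _ (atom_mem m hpos (irdx_le_card ρ m x))).trans
      (atom_irdx_le_gammaStar ρ hm x hρ hpos)

end gammaStar

/-- `min γ α_j` with `α_0 = 0`; the largest atom is not capped, so that `serviceTime` is strictly
increasing on all of `ℝ`. -/
noncomputable def served (m : Multiset ℝ) (γ : ℝ) (j : ℕ) : ℝ :=
  if j = 0 then 0 else if j = Multiset.card m then γ else min γ (atom m j)

noncomputable def serviceTime (ρ : ℕ → ℝ) (m : Multiset ℝ) (γ : ℝ) : ℝ :=
  ∑ i ∈ range (Multiset.card m), (served m γ (i + 1) - served m γ i) / ρ (Multiset.card m - i)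

lemma monotone_min_sub_min {a b : ℝ} (hba : b ≤ a) : Monotone fun γ : ℝ => min γ a - min γ b := by
  intro γ₁ γ₂ hγ
  simp only [min_def]
  split_ifs <;> linarith

lemma monotone_sub_min (b : ℝ) : Monotone fun γ : ℝ => γ - min γ b := by
  intro γ₁ γ₂ hγ
  simp only [min_def]
  split_ifs <;> linarith

lemma monotone_served_succ_sub (m : Multiset ℝ) {i : ℕ} (hi : i < Multiset.card m) :
    Monotone fun γ => served m γ (i + 1) - served m γ i := by
  have hsucc : ∀ γ, served m γ (i + 1) =
      if i + 1 = Multiset.card m then γ else min γ (atom m (i + 1)) :=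
    fun γ => if_neg i.succ_ne_zero
  rcases Nat.eq_zero_or_pos i with rfl | hpos
  · have h0 : ∀ γ, served m γ 0 = 0 := fun γ => if_pos rfl
    simp only [hsucc, h0, sub_zero]
    split_ifs
    exacts [monotone_id (α := ℝ), (monotone_id (α := ℝ)).min monotone_const]
  · have hlow : ∀ γ, served m γ i = min γ (atom m i) := fun γ => by
      rw [served, if_neg hpos.ne', if_neg hi.ne]
    simp only [hsucc, hlow]
    split_ifs
    exacts [monotone_sub_min _, monotone_min_sub_min (atom_le_atom m hpos i.le_succ (by omega))]

lemma served_zero_left {m : Multiset ℝ} (hm₀ : ∀ a ∈ m, 0 ≤ a) {j : ℕ}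
    (hj : j ≤ Multiset.card m) : served m 0 j = 0 := by
  unfold served
  split_ifs with h0 hN
  · rfl
  · rfl
  · exact min_eq_left (hm₀ _ (atom_mem m (Nat.pos_of_ne_zero h0) hj))

lemma served_succ_sub_nonneg {m : Multiset ℝ} (hm₀ : ∀ a ∈ m, 0 ≤ a) {γ : ℝ} (hγ : 0 ≤ γ)
    {i : ℕ} (hi : i < Multiset.card m) : 0 ≤ served m γ (i + 1) - served m γ i := by
  simpa only [served_zero_left hm₀ hi, served_zero_left hm₀ hi.le, sub_self]
    using monotone_served_succ_sub m hi hγ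

lemma sum_served_succ_sub {m : Multiset ℝ} (hm : m ≠ 0) (γ : ℝ) :
    ∑ i ∈ range (Multiset.card m), (served m γ (i + 1) - served m γ i) = γ := by
  rw [sum_range_sub]
  simp [served, Multiset.card_eq_zero.not.mpr hm]

lemma serviceTime_le_of_le {r rt : ℕ → ℝ} (hr : ∀ n, 1 ≤ n → 0 < r n)
    (hle : ∀ n, 1 ≤ n → r n ≤ rt n) {m : Multiset ℝ} (hm₀ : ∀ a ∈ m, 0 ≤ a) {γ : ℝ}
    (hγ : 0 ≤ γ) : serviceTime rt m γ ≤ serviceTime r m γ := by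
  refine sum_le_sum fun i hi => ?_
  have hi := mem_range.mp hi
  exact div_le_div_of_nonneg_left (served_succ_sub_nonneg hm₀ hγ hi) (hr _ (by omega))
    (hle _ (by omega))

lemma strictMono_serviceTime {ρ : ℕ → ℝ} (hρ : ∀ n, 1 ≤ n → 0 < ρ n) {m : Multiset ℝ}
    (hm : m ≠ 0) : StrictMono (serviceTime ρ m) := by
  intro γ₁ γ₂ hγ
  have hsum : ∑ i ∈ range (Multiset.card m), (served m γ₁ (i + 1) - served m γ₁ i) <
      ∑ i ∈ range (Multiset.card m), (served m γ₂ (i + 1) - served m γ₂ i) := by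
    rwa [sum_served_succ_sub hm, sum_served_succ_sub hm]
  obtain ⟨k, hk, hlt⟩ := exists_lt_of_sum_lt hsum
  refine sum_lt_sum (fun i hi => ?_) ⟨k, hk, ?_⟩
  · have hi := mem_range.mp hi
    exact div_le_div_of_nonneg_right (monotone_served_succ_sub m hi hγ.le)
      (hρ _ (by omega)).le
  · exact div_lt_div_of_pos_right hlt (hρ _ (by have := mem_range.mp hk; omega))

lemma serviceTime_eq (ρ : ℕ → ℝ) {m : Multiset ℝ} {γ : ℝ} {τ : ℕ} (h1 : 1 ≤ τ)
    (h2 : τ ≤ Multiset.card m) (hlow : ∀ j, 1 ≤ j → j < τ → atom m j ≤ γ)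
    (hhigh : ∀ j, τ ≤ j → j < Multiset.card m → γ ≤ atom m j) :
    serviceTime ρ m γ = ∑ j ∈ Icc 1 (τ - 1), atom m j *
        (1 / ρ (Multiset.card m - j + 1) - 1 / ρ (Multiset.card m - j))
      + γ / ρ (Multiset.card m - τ + 1) := by
  set N := Multiset.card m
  obtain ⟨k, rfl⟩ : ∃ k, τ = k + 1 := ⟨τ - 1, by omega⟩
  have hserved_low : ∀ j, 1 ≤ j → j ≤ k → served m γ j = atom m j := fun j hj1 hj2 => by
    rw [served, if_neg (by omega), if_neg (by omega), min_eq_right (hlow j hj1 (by omega))]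
  have hserved_high : ∀ j, k + 1 ≤ j → j ≤ N → served m γ j = γ := fun j hj1 hj2 => by
    rw [served, if_neg (by omega)]
    split_ifs with hN
    · rfl
    · exact min_eq_left (hhigh j hj1 (by omega))
  have htail : ∑ i ∈ Ico (k + 1) N, (served m γ (i + 1) - served m γ i) / ρ (N - i) = 0 :=
    sum_eq_zero fun i hi => by
      obtain ⟨hi1, hi2⟩ := mem_Ico.mp hi
      rw [hserved_high (i + 1) (by omega) (by omega), hserved_high i hi1 hi2.le, sub_self,
        zero_div]
  have hhead : ∑ j ∈ Icc 1 k, served m γ j * ((ρ (N - (j - 1)))⁻¹ - (ρ (N - j))⁻¹) =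
      ∑ j ∈ Icc 1 k, atom m j * ((ρ (N - j + 1))⁻¹ - (ρ (N - j))⁻¹) :=
    sum_congr rfl fun j hj => by
      obtain ⟨hj1, hj2⟩ := mem_Icc.mp hj
      rw [hserved_low j hj1 hj2, show N - (j - 1) = N - j + 1 by omega]
  rw [serviceTime, ← sum_range_add_sum_Ico _ h2, htail, add_zero]
  simp only [div_eq_mul_inv, one_mul]
  rw [sum_range_sub_mul_eq (a := served m γ) (if_pos rfl), sum_Icc_succ_top (by omega),
    Nat.add_sub_cancel, hhead, hserved_high (k + 1) le_rfl h2,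
    show N - k = N - (k + 1) + 1 by omega]
  ring

lemma serviceTime_gammaStar {ρ : ℕ → ℝ} (hρ : ∀ n, 1 ≤ n → 0 < ρ n) {m : Multiset ℝ}
    (hm : m ≠ 0) (x : ℝ) : serviceTime ρ m (gammaStar ρ m x) = x := by
  have hN : 1 ≤ Multiset.card m := Multiset.card_pos.mpr hm
  have h1 : 1 ≤ serviceIndex ρ m x := le_min (Nat.le_add_left 1 _) hN
  have h2 : serviceIndex ρ m x ≤ Multiset.card m := min_le_right _ _
  rw [serviceTime_eq ρ h1 h2 (fun j => atom_le_gammaStar ρ hm x hρ)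
      (fun j => gammaStar_le_atom ρ hm x), gammaStar_eq_gam ρ hm, gam,
    mul_div_cancel_left₀ _ (hρ _ (by omega)).ne']
  ring

lemma gammaStar_le_gammaStar {r rt : ℕ → ℝ} (hr : ∀ n, 1 ≤ n → 0 < r n)
    (hle : ∀ n, 1 ≤ n → r n ≤ rt n) {m : Multiset ℝ} (hm₀ : ∀ a ∈ m, 0 ≤ a) {x : ℝ}
    (hx : 0 ≤ x) : gammaStar r m x ≤ gammaStar rt m x := by
  rcases eq_or_ne m 0 with rfl | hm
  · simp [gammaStar]
  have hrt : ∀ n, 1 ≤ n → 0 < rt n := fun n hn => (hr n hn).trans_le (hle n hn)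
  refine (strictMono_serviceTime hrt hm).le_iff_le.mp ?_
  calc serviceTime rt m (gammaStar r m x)
      ≤ serviceTime r m (gammaStar r m x) :=
        serviceTime_le_of_le hr hle hm₀ (gammaStar_nonneg r hm x hr hm₀ hx)
    _ = serviceTime rt m (gammaStar rt m x) := by
        rw [serviceTime_gammaStar hr hm, serviceTime_gammaStar hrt hm]

theorem stmt14_general (r rt : ℕ → ℝ)
    (hr : ∀ n, 1 ≤ n → 0 < r n ∧ r n ≤ 1)
    (hle : ∀ i, 1 ≤ i → r i ≤ rt i)
    (x : ℝ) (hx : 0 ≤ x)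
    (m : Multiset ℝ) (hm : ∀ a ∈ m, (0:ℝ) ≤ a) :
    IntOrder (toMeas (PhiM rt m x)) (toMeas (PhiM r m x)) := by
  intro f _ hf_mono hf_nonneg _
  have hγ : gammaStar r m x ≤ gammaStar rt m x :=
    gammaStar_le_gammaStar (fun n hn => (hr n hn).1) hle hm hx
  rw [integral_toMeas, integral_toMeas, PhiM, PhiM, Multiset.map_map, Multiset.map_map]
  exact Multiset.sum_map_filter_le_sum_map_filter (fun a ha => hγ.trans_lt ha)
    (fun a _ => hf_mono (sub_le_sub_left hγ a)) (fun a => hf_nonneg _) m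

/-- Comparison of rates: if `r ≤ r̃` pointwise (a slower server), then
`Φ^{r̃}(μ,x) ≼ Φ^{r}(μ,x)`, i.e. `Φ^r(μ,x) ≽ Φ^{r̃}(μ,x)`. -/
theorem stmt14 (r rt : ℕ → ℝ)
    (hr : ∀ n, 1 ≤ n → 0 < r n ∧ r n ≤ 1) (hrt : ∀ n, 1 ≤ n → 0 < rt n ∧ rt n ≤ 1)
    (hrmono : ∀ p q, 1 ≤ p → p ≤ q → r q ≤ r p)
    (hrtmono : ∀ p q, 1 ≤ p → p ≤ q → rt q ≤ rt p)
    (hle : ∀ i, 1 ≤ i → r i ≤ rt i)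
    (x : ℝ) (hx : 0 ≤ x)
    (m : Multiset ℝ) (hm : ∀ a ∈ m, (0:ℝ) ≤ a) :
    IntOrder (toMeas (PhiM rt m x)) (toMeas (PhiM r m x)) :=
  stmt14_general r rt hr hle x hx m hm
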